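/- The map $\phi$ is orthogonal with respect to the pairing on $TZ\oplus T^*Z$: for all invariant sections $\mathcal{U},\mathcal{V}\in\Gamma(TZ\oplus T^*Z)^{\mathbb{T}}$ one has $\langle\phi(\mathcal{U}),\phi(\mathcal{V})\rangle = \langle\mathcal{U},\mathcal{V}\rangle$; hence $\phi$ induces an isomorphism of the associated Clifford algebras. -/
import Mathlib


/-!
STATEMENT 11.  The map `φ` is orthogonal.

`π : Z → X` is a principal circle bundle with invariant connection 1-form `A` and
vertical vector field `v` (`ι_v A = 1`).  Every invariant section of `TZ ⊕ T*Z`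
decomposes uniquely as `X + α = (x + f v) + (θ + g A)` where `x` is the invariant
horizontal lift of a vector field on `X`, `θ` is the pullback of a 1-form on `X`,
and `f, g ∈ C^∞(X)`.  Thus `Γ(TZ ⊕ T*Z)^𝕋` is parametrized by quadruples
`(x, f, θ, g) ∈ VX × FnX × O1X × FnX`, and `φ((x + f v) + (θ + g A)) = (x + g v) + (θ + f A)`
corresponds to swapping `f` and `g`.

Since `ι_x A = 0`, `ι_v θ' = 0` and `ι_v A = 1`, the natural pairing
`⟨X+α, Y+β⟩ = ½(ι_X β + ι_Y α)` is computed from the base data as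
`⟨(x,f,θ,g), (y,h,σ,k)⟩ = ½(ι_x σ + f k + ι_y θ + h g)`, where `c = ι` is the
contraction of 1-forms with vector fields on the base `X`.
-/

structure InvariantSectionSetup (FnX : Type*) [CommRing FnX] [Algebra ℂ FnX]
    (VX O1X : Type*) [AddCommGroup VX] [Module FnX VX]
    [AddCommGroup O1X] [Module FnX O1X] where
  /-- contraction of 1-forms with vector fields on the base `X` -/
  c : VX →ₗ[FnX] O1X →ₗ[FnX] FnX

namespace InvariantSectionSetup

variable {FnX : Type*} [CommRing FnX] [Algebra ℂ FnX]
    {VX O1X : Type*} [AddCommGroup VX] [Module FnX VX]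
    [AddCommGroup O1X] [Module FnX O1X]
    (S : InvariantSectionSetup FnX VX O1X)

/-- The parametrization of invariant sections: `(x, f, θ, g)` stands for
`(x + f v) + (θ + g A)`. -/
abbrev Sec (FnX VX O1X : Type*) := VX × FnX × O1X × FnX

/-- The map `φ((x + f v) + (θ + g A)) = (x + g v) + (θ + f A)`: swap `f` and `g`. -/
def phi (U : Sec FnX VX O1X) : Sec FnX VX O1X := (U.1, U.2.2.2, U.2.2.1, U.2.1)

/-- `φ` as an `FnX`-linear equivalence of `Γ(TZ ⊕ T*Z)^𝕋`. -/
def phiL : Sec FnX VX O1X ≃ₗ[FnX] Sec FnX VX O1X where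
  toFun U := (U.1, U.2.2.2, U.2.2.1, U.2.1)
  invFun U := (U.1, U.2.2.2, U.2.2.1, U.2.1)
  map_add' := by intros; rfl
  map_smul' := by intros; rfl
  left_inv := fun _ => rfl
  right_inv := fun _ => rfl

/-- The pairing `⟨X+α, Y+β⟩ = ½(ι_X β + ι_Y α)` on invariant sections, in terms of
the base data: `⟨(x,f,θ,g), (y,h,σ,k)⟩ = ½(ι_x σ + f k + ι_y θ + h g)`. -/
noncomputable def pairing (U V : Sec FnX VX O1X) : FnX :=
  (2⁻¹ : ℂ) • (S.c U.1 V.2.2.1 + U.2.1 * V.2.2.2 + S.c V.1 U.2.2.1 + V.2.1 * U.2.2.2)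

/-- The pairing as an `FnX`-bilinear map (without the factor `½`, one copy of the
two symmetric terms): its quadratic form is `Q(U) = ⟨U, U⟩ = ι_X α`. -/
def pairingBilin : Sec FnX VX O1X →ₗ[FnX] Sec FnX VX O1X →ₗ[FnX] FnX :=
  LinearMap.mk₂ FnX (fun U V => S.c U.1 V.2.2.1 + U.2.1 * V.2.2.2)
    (fun U U' V => by
      simp only [Prod.fst_add, Prod.snd_add, map_add, LinearMap.add_apply, add_mul]
      ring)
    (fun a U V => by
      simp only [Prod.smul_fst, Prod.smul_snd, map_smul, LinearMap.smul_apply,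
        smul_eq_mul, smul_add]
      ring)
    (fun U V V' => by
      simp only [Prod.fst_add, Prod.snd_add, map_add, LinearMap.add_apply, mul_add]
      ring)
    (fun a U V => by
      simp only [Prod.smul_fst, Prod.smul_snd, map_smul, LinearMap.smul_apply,
        smul_eq_mul, smul_add]
      ring)

/-- The quadratic form `Q(U) = ⟨U, U⟩` of the pairing on `Γ(TZ ⊕ T*Z)^𝕋`. -/
def Q : QuadraticForm FnX (Sec FnX VX O1X) :=
  LinearMap.BilinMap.toQuadraticMap S.pairingBilin

end InvariantSectionSetup

open InvariantSectionSetup in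
/-- The map `φ` is orthogonal with respect to the pairing on
`TZ ⊕ T*Z`: for all invariant sections `𝒰, 𝒱 ∈ Γ(TZ ⊕ T*Z)^𝕋` one has
`⟨φ(𝒰), φ(𝒱)⟩ = ⟨𝒰, 𝒱⟩`; hence `φ` induces an isomorphism of the associated
Clifford algebras (sending the generator `γ_𝒰` to `γ_{φ(𝒰)}`). -/
theorem phi_orthogonal_and_clifford_iso
    {FnX : Type*} [CommRing FnX] [Algebra ℂ FnX]
    {VX O1X : Type*} [AddCommGroup VX] [Module FnX VX]
    [AddCommGroup O1X] [Module FnX O1X]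
    (S : InvariantSectionSetup FnX VX O1X) :
    (∀ U V : Sec FnX VX O1X, S.pairing (phi U) (phi V) = S.pairing U V) ∧
    (∃ e : CliffordAlgebra S.Q ≃ₐ[FnX] CliffordAlgebra S.Q,
      ∀ U : Sec FnX VX O1X,
        e (CliffordAlgebra.ι S.Q U) = CliffordAlgebra.ι S.Q (phiL U)) := by
  constructor
  · intro U V
    simp only [InvariantSectionSetup.pairing, InvariantSectionSetup.phi]
    ring_nf
  · let hiso : QuadraticMap.IsometryEquiv (InvariantSectionSetup.Q S) (InvariantSectionSetup.Q S) :=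
      { toLinearEquiv := InvariantSectionSetup.phiL (FnX := FnX)
        map_app' := fun U => by
          simp [InvariantSectionSetup.Q, InvariantSectionSetup.pairingBilin,
            LinearMap.BilinMap.toQuadraticMap_apply, InvariantSectionSetup.phiL,
            mul_comm] }
    refine ⟨CliffordAlgebra.equivOfIsometry hiso, fun U => ?_⟩
    rw [CliffordAlgebra.equivOfIsometry_apply, CliffordAlgebra.map_apply_ι]
    rfl
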